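/- Let L = h²∂² + 2u with u ∈ R and let c ∈ R with ∂c = 0. In Ψ(R)[ε] set L̃ := L − 2εc. Then the unique square root of L̃ of the form h∂ + (terms of order ≤ 0) is L̃^{1/2} = L^{1/2} − ε c L^{−1/2}; for every p ≥ 0 one has L̃^{p+1/2} := (L̃^{1/2})^{2p+1} = L^{p+1/2} − ε (2p+1) c L^{p−1/2}; and consequently Res_∂ L̃^{p+1/2} = Res_∂ L^{p+1/2} − ε (2p+1) c · Res_∂ L^{p−1/2}. -/

import Mathlib

open scoped BigOperators

/-- Generalized binomial coefficient `C(k,l) = k(k-1)⋯(k-l+1)/l!` for `k : ℤ`. -/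
def gbinom (k : ℤ) (l : ℕ) : ℚ :=
  (∏ i ∈ Finset.range l, ((k : ℚ) - i)) / (Nat.factorial l)

/-- Pseudo-differential operators (and symbols): coefficient functions `ℤ → R`
with support bounded above.  The parameter `d` (the derivation) determines the product. -/
structure PDO (R : Type) [CommRing R] [Algebra ℚ R] (d : R →+ R) where
  coeff : ℤ → R
  bdd : ∃ N : ℤ, ∀ n : ℤ, N < n → coeff n = 0

namespace PDO

variable {R : Type} [CommRing R] [Algebra ℚ R] {d : R →+ R}

theorem ext' {A B : PDO R d} (h : A.coeff = B.coeff) : A = B := by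
  cases A; cases B; cases h; rfl

set_option linter.unusedSectionVars false in
theorem iterD_zero (d : R →+ R) (j : ℕ) : d^[j] (0 : R) = 0 := by
  induction j with
  | zero => rfl
  | succ j ih => rw [Function.iterate_succ_apply', ih, map_zero]

instance : Zero (PDO R d) := ⟨⟨fun _ => 0, ⟨0, fun _ _ => rfl⟩⟩⟩

instance : One (PDO R d) :=
  ⟨⟨fun n => if n = 0 then 1 else 0, ⟨0, fun n hn => if_neg (by omega)⟩⟩⟩

instance : Add (PDO R d) :=
  ⟨fun A B => ⟨fun n => A.coeff n + B.coeff n, by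
    obtain ⟨N, hN⟩ := A.bdd
    obtain ⟨M, hM⟩ := B.bdd
    exact ⟨max N M, fun n hn => by
      show A.coeff n + B.coeff n = 0
      rw [hN n (lt_of_le_of_lt (le_max_left N M) hn),
        hM n (lt_of_le_of_lt (le_max_right N M) hn), add_zero]⟩⟩⟩

instance : Neg (PDO R d) :=
  ⟨fun A => ⟨fun n => -A.coeff n, by
    obtain ⟨N, hN⟩ := A.bdd
    exact ⟨N, fun n hn => by show -A.coeff n = 0; rw [hN n hn, neg_zero]⟩⟩⟩

instance : SMul ℚ (PDO R d) :=
  ⟨fun c A => ⟨fun n => c • A.coeff n, by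
    obtain ⟨N, hN⟩ := A.bdd
    exact ⟨N, fun n hn => by show c • A.coeff n = 0; rw [hN n hn, smul_zero]⟩⟩⟩

instance : AddCommGroup (PDO R d) where
  add := (· + ·)
  zero := 0
  neg := Neg.neg
  add_assoc A B C := ext' (funext fun n => add_assoc (A.coeff n) (B.coeff n) (C.coeff n))
  zero_add A := ext' (funext fun n => zero_add (A.coeff n))
  add_zero A := ext' (funext fun n => add_zero (A.coeff n))
  add_comm A B := ext' (funext fun n => add_comm (A.coeff n) (B.coeff n))
  neg_add_cancel A := ext' (funext fun n => neg_add_cancel (A.coeff n))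
  nsmul := nsmulRec
  zsmul := zsmulRec

/-- The product of pseudo-differential operators, determined by the commutation rule
`∂^k · f = Σ_{l ≥ 0} C(k,l) (∂^l f) ∂^(k-l)`. -/
noncomputable instance : Mul (PDO R d) :=
  ⟨fun A B =>
    ⟨fun n => ∑ᶠ (k : ℤ) (m : ℤ),
        if _ : 0 ≤ k + m - n then
          A.coeff k * (gbinom k (k + m - n).toNat • (d^[(k + m - n).toNat] (B.coeff m)))
        else 0, by
      obtain ⟨N, hN⟩ := A.bdd
      obtain ⟨M, hM⟩ := B.bdd
      refine ⟨N + M, fun n hn => ?_⟩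
      have hz : ∀ k m : ℤ,
          (if _ : 0 ≤ k + m - n then
            A.coeff k * (gbinom k (k + m - n).toNat • (d^[(k + m - n).toNat] (B.coeff m)))
          else 0) = 0 := by
        intro k m
        by_cases hl : 0 ≤ k + m - n
        · rw [dif_pos hl]
          by_cases hk : N < k
          · rw [hN k hk, zero_mul]
          · rw [hM m (by omega), iterD_zero, smul_zero, mul_zero]
        · rw [dif_neg hl]
      simp only [hz, finsum_zero]⟩⟩

noncomputable def npow (A : PDO R d) : ℕ → PDO R d
  | 0 => 1
  | n + 1 => npow A n * A

noncomputable instance : Pow (PDO R d) ℕ := ⟨fun A n => A.npow n⟩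

/-- The monomial `r ∂^k`. -/
def mono (r : R) (k : ℤ) : PDO R d :=
  ⟨fun n => if n = k then r else 0, ⟨k, fun n hn => if_neg (by omega)⟩⟩

/-- The constant (order-zero) operator `r`. -/
def const (r : R) : PDO R d := mono r 0

/-- The operator `∂`. -/
def del : PDO R d := mono (1 : R) 1

/-- The operator `h∂`. -/
def hdel (h : Rˣ) : PDO R d := mono (h : R) 1

/-- The Lax operator `L = h²∂² + 2u`. -/
def Lop (h : Rˣ) (u : R) : PDO R d :=
  ⟨fun n => if n = 2 then (h : R) ^ 2 else if n = 0 then 2 * u else 0,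
   ⟨2, fun n hn => by
      show (if n = 2 then (h : R) ^ 2 else if n = 0 then 2 * u else 0) = 0
      rw [if_neg (by omega), if_neg (by omega)]⟩⟩

/-- The differential part `A₊`. -/
def pos (A : PDO R d) : PDO R d :=
  ⟨fun n => if 0 ≤ n then A.coeff n else 0, by
    obtain ⟨N, hN⟩ := A.bdd
    refine ⟨N, fun n hn => ?_⟩
    show (if 0 ≤ n then A.coeff n else 0) = 0
    by_cases h0 : (0 : ℤ) ≤ n
    · rw [if_pos h0]; exact hN n hn
    · rw [if_neg h0]⟩

/-- The integral part `A₋ = A − A₊`. -/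
def negp (A : PDO R d) : PDO R d :=
  ⟨fun n => if n < 0 then A.coeff n else 0, ⟨0, fun n hn => if_neg (by omega)⟩⟩

/-- The residue `Res_∂ A = a₋₁`. -/
def res (A : PDO R d) : R := A.coeff (-1)

/-- The formal adjoint, determined by `(f ∂^k)* = (−∂)^k · f`. -/
noncomputable def adj (A : PDO R d) : PDO R d :=
  ⟨fun n => ∑ᶠ k : ℤ,
      if _ : 0 ≤ k - n then
        (((-1 : ℚ) ^ k) * gbinom k (k - n).toNat) • (d^[(k - n).toNat] (A.coeff k))
      else 0, by
    obtain ⟨N, hN⟩ := A.bdd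
    refine ⟨N, fun n hn => ?_⟩
    have hz : ∀ k : ℤ, (if _ : 0 ≤ k - n then
        (((-1 : ℚ) ^ k) * gbinom k (k - n).toNat) • (d^[(k - n).toNat] (A.coeff k))
      else 0) = 0 := by
      intro k
      by_cases hl : 0 ≤ k - n
      · rw [dif_pos hl, hN k (by omega), iterD_zero, smul_zero]
      · rw [dif_neg hl]
    simp only [hz, finsum_zero]⟩

/-- The operator `P(h∂) = Σ pₙ hⁿ ∂ⁿ` associated to the symbol `P(λ) = Σ pₙ λⁿ`. -/
noncomputable def ofSymbol (h : Rˣ) (A : PDO R d) : PDO R d :=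
  ⟨fun n => A.coeff n * ((h ^ n : Rˣ) : R), by
    obtain ⟨N, hN⟩ := A.bdd
    exact ⟨N, fun n hn => by show A.coeff n * ((h ^ n : Rˣ) : R) = 0; rw [hN n hn, zero_mul]⟩⟩

/-- Apply `d^[i]` to each coefficient. -/
def mapD (i : ℕ) (A : PDO R d) : PDO R d :=
  ⟨fun n => d^[i] (A.coeff n), by
    obtain ⟨N, hN⟩ := A.bdd
    exact ⟨N, fun n hn => by show d^[i] (A.coeff n) = 0; rw [hN n hn, iterD_zero]⟩⟩

/-- The coefficientwise extension of an additive map `D : R →+ R`. -/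
def mapHom (D : R →+ R) (A : PDO R d) : PDO R d :=
  ⟨fun n => D (A.coeff n), by
    obtain ⟨N, hN⟩ := A.bdd
    exact ⟨N, fun n hn => by show D (A.coeff n) = 0; rw [hN n hn, map_zero]⟩⟩

/-- The commutator `[A, B] = AB − BA`. -/
noncomputable def comm (A B : PDO R d) : PDO R d := A * B - B * A

end PDO

/-- The Leibniz rule: `d` is a derivation. -/
def Leibniz {R : Type} [CommRing R] [Algebra ℚ R] (d : R →+ R) : Prop :=
  ∀ a b : R, d (a * b) = a * d b + b * d a

/-- `aₙ = 1/(2n+1)!!`. -/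
def kdvA (n : ℕ) : ℚ := 1 / (Nat.doubleFactorial (2 * n + 1))

/-- `bₙ = (2n−1)!!` (with `b₀ = (−1)!! = 1`). -/
def kdvB (n : ℕ) : ℚ := (Nat.doubleFactorial (2 * n - 1) : ℕ)

/-- Pseudo-differential operators with coefficients in the dual numbers
`R[ε]/(ε²)`: `⟨A, B⟩` represents `A + εB`. -/
structure EPDO (R : Type) [CommRing R] [Algebra ℚ R] (d : R →+ R) where
  re : PDO R d
  im : PDO R d

namespace EPDO

variable {R : Type} [CommRing R] [Algebra ℚ R] {d : R →+ R}

instance : Add (EPDO R d) := ⟨fun A B => ⟨A.re + B.re, A.im + B.im⟩⟩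
instance : Neg (EPDO R d) := ⟨fun A => ⟨-A.re, -A.im⟩⟩
instance : Sub (EPDO R d) := ⟨fun A B => ⟨A.re - B.re, A.im - B.im⟩⟩
instance : Zero (EPDO R d) := ⟨⟨0, 0⟩⟩
instance : One (EPDO R d) := ⟨⟨1, 0⟩⟩

/-- Multiplication in the dual numbers: `(A + εB)(C + εD) = AC + ε(AD + BC)`. -/
noncomputable instance : Mul (EPDO R d) :=
  ⟨fun A B => ⟨A.re * B.re, A.re * B.im + A.im * B.re⟩⟩

instance : SMul ℚ (EPDO R d) := ⟨fun c A => ⟨c • A.re, c • A.im⟩⟩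

noncomputable def epow (A : EPDO R d) : ℕ → EPDO R d
  | 0 => 1
  | n + 1 => epow A n * A

noncomputable instance : Pow (EPDO R d) ℕ := ⟨fun A n => A.epow n⟩

/-- The inclusion `Ψ(R) → Ψ(R)[ε]`. -/
def lift (A : PDO R d) : EPDO R d := ⟨A, 0⟩

/-- The square-zero formal parameter `ε`. -/
def eps : EPDO R d := ⟨0, 1⟩

/-- The adjoint, extended `ε`-linearly. -/
noncomputable def eadj (A : EPDO R d) : EPDO R d := ⟨PDO.adj A.re, PDO.adj A.im⟩

/-- The differential part, extended `ε`-linearly. -/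
def epos (A : EPDO R d) : EPDO R d := ⟨PDO.pos A.re, PDO.pos A.im⟩

/-- The integral part, extended `ε`-linearly. -/
def enegp (A : EPDO R d) : EPDO R d := ⟨PDO.negp A.re, PDO.negp A.im⟩

/-- The commutator in `Ψ(R)[ε]`. -/
noncomputable def ecomm (A B : EPDO R d) : EPDO R d := A * B - B * A

/-- The residue, with values in the dual numbers `R[ε]` (as a pair). -/
def eres (A : EPDO R d) : R × R := (PDO.res A.re, PDO.res A.im)

end EPDO


/-!
Associativity of the product on `Ψ(R)` is the one non-formal input: expanding
`((A B) C)ₙ` and `(A (B C))ₙ` over the coefficients of `A`, `B`, `C` and the numbers of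
derivatives falling on `B` and `C`, the two sides match by the Leibniz rule for `∂ⁱ` and the
Chu–Vandermonde identity `C(k,α) C(k+m-α,β) = Σᵢ C(k,α+i) C(α+i,α) C(m,β-i)`.

Granting it, `Ψ(R)` is a ring, and since `∂c = 0` the operator `c` is central, so
`X = c L^{-1/2}` commutes with `L^{1/2}` and `L^{1/2} X + X L^{1/2} = 2c`. Hence
`(L^{1/2} - εX)^(n+1) = L^{(n+1)/2} - (n+1) ε X L^{n/2}` and `(L^{1/2} - εX)² = L - 2εc`.
Uniqueness compares top coefficients: if `Y`, `Y'` have leading term `h∂` and `D ≠ 0` has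
leading coefficient `δ`, then `Y D + D Y'` has leading coefficient `2hδ ≠ 0`.
-/

open Finset

theorem gbinom_eq_choose (k : ℤ) (l : ℕ) : gbinom k l = Ring.choose (k : ℚ) l := by
  rw [Ring.choose_eq_smul, ← Polynomial.aeval_eq_smeval, Polynomial.aeval_def,
    ← Polynomial.eval_map, descPochhammer_map, descPochhammer_eval_eq_prod_range, gbinom,
    smul_eq_mul, div_eq_inv_mul]

theorem gbinom_zero_right (k : ℤ) : gbinom k 0 = 1 := by
  simp [gbinom]

theorem gbinom_zero_left {l : ℕ} (hl : l ≠ 0) : gbinom 0 l = 0 := by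
  rw [gbinom, prod_eq_zero (mem_range.2 (Nat.pos_of_ne_zero hl)) (by simp), zero_div]

theorem gbinom_add (x y : ℤ) (n : ℕ) :
    gbinom (x + y) n = ∑ i ∈ range (n + 1), gbinom x i * gbinom y (n - i) := by
  simp only [gbinom_eq_choose, Int.cast_add]
  rw [Ring.add_choose_eq n (Commute.all _ _), Nat.sum_antidiagonal_eq_sum_range_succ
    (fun i j => Ring.choose (x : ℚ) i * Ring.choose (y : ℚ) j)]

theorem choose_mul_gbinom (k : ℤ) (α j : ℕ) :
    ((α + j).choose α : ℚ) * gbinom k (α + j) = gbinom k α * gbinom (k - α) j := by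
  have h := Ring.choose_smul_choose (k : ℚ) (Nat.le_add_right α j)
  rw [Nat.add_sub_cancel_left, nsmul_eq_mul] at h
  simpa only [gbinom_eq_choose, Int.cast_sub, Int.cast_natCast] using h

theorem Finset.sum_range_eq_sum_range_of_eq_zero {M : Type*} [AddCommMonoid M] {K N : ℕ}
    (hN : N ≤ K) (f : ℕ → M) (hf : ∀ i, N ≤ i → i < K → f i = 0) :
    ∑ i ∈ range N, f i = ∑ i ∈ range K, f i :=
  sum_subset (range_subset_range.2 hN) fun i hiK hiN => by
    rw [mem_range] at hiK hiN
    exact hf i (not_lt.1 hiN) hiK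

theorem Finset.sum_eq_sum_comp_add {M : Type*} [AddCommMonoid M] {f : ℤ → M}
    {s t : Finset ℤ} (e : ℤ) (hs : ∀ q, f q ≠ 0 → q ∈ s) (ht : ∀ m, f (m + e) ≠ 0 → m ∈ t) :
    ∑ q ∈ s, f q = ∑ m ∈ t, f (m + e) := by
  rw [← finsum_eq_sum_of_support_subset f fun q hq => hs q hq,
    ← finsum_eq_sum_of_support_subset (fun m => f (m + e)) fun m hm => ht m hm]
  exact (finsum_comp_equiv (Equiv.addRight e)).symm

section Vandermonde

variable {M : Type*} [AddCommGroup M] [Module ℚ M] (k m : ℤ) (K : ℕ) (T : ℕ → ℕ → M)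

theorem sum_gbinom_mul_gbinom_smul (hT : ∀ α β, K ≤ α + β → T α β = 0) :
    ∑ α ∈ range K, ∑ β ∈ range K, (gbinom k α * gbinom (k + m - α) β) • T α β =
      ∑ α ∈ range K, ∑ i ∈ range K, ∑ s ∈ range K,
        (gbinom k α * gbinom (k - α) i * gbinom m s) • T α (i + s) := by
  refine sum_congr rfl fun α _ => ?_
  calc ∑ β ∈ range K, (gbinom k α * gbinom (k + m - α) β) • T α β
      = ∑ β ∈ range K, ∑ i ∈ range (β + 1),
          (gbinom k α * gbinom (k - α) i * gbinom m (β - i)) • T α (i + (β - i)) := by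
        refine sum_congr rfl fun β _ => ?_
        rw [show k + m - α = (k - α) + m by ring, gbinom_add, mul_sum, sum_smul]
        refine sum_congr rfl fun i hi => ?_
        rw [Nat.add_sub_cancel' (Nat.lt_succ_iff.1 (mem_range.1 hi)), mul_assoc]
    _ = ∑ i ∈ range K, ∑ s ∈ range (K - i),
          (gbinom k α * gbinom (k - α) i * gbinom m s) • T α (i + s) :=
        sum_range_diag_flip K fun i s =>
          (gbinom k α * gbinom (k - α) i * gbinom m s) • T α (i + s)
    _ = _ := sum_congr rfl fun i _ =>
        sum_range_eq_sum_range_of_eq_zero (Nat.sub_le K i) _ fun s hs _ => by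
          rw [hT α (i + s) (by omega), smul_zero]

theorem sum_gbinom_mul_gbinom_mul_choose_smul (hT : ∀ α β, K ≤ α + β → T α β = 0) :
    ∑ t ∈ range K, ∑ s ∈ range K, ∑ i ∈ range (t + 1),
        (gbinom k t * gbinom m s * (t.choose i : ℚ)) • T i (t - i + s) =
      ∑ α ∈ range K, ∑ i ∈ range K, ∑ s ∈ range K,
        (gbinom k α * gbinom (k - α) i * gbinom m s) • T α (i + s) := by
  set f : ℕ → ℕ → M := fun α i => ∑ s ∈ range K,
    (gbinom k α * gbinom (k - α) i * gbinom m s) • T α (i + s)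
  calc _ = ∑ t ∈ range K, ∑ i ∈ range (t + 1), f i (t - i) := by
        refine sum_congr rfl fun t _ => ?_
        rw [sum_comm]
        refine sum_congr rfl fun i hi => sum_congr rfl fun s _ => ?_
        obtain ⟨j, rfl⟩ := Nat.exists_eq_add_of_le (Nat.lt_succ_iff.1 (mem_range.1 hi))
        rw [Nat.add_sub_cancel_left, ← choose_mul_gbinom, mul_right_comm (gbinom k _),
          mul_comm (gbinom k _)]
    _ = ∑ α ∈ range K, ∑ i ∈ range (K - α), f α i := sum_range_diag_flip K f
    _ = _ := sum_congr rfl fun α _ =>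
        sum_range_eq_sum_range_of_eq_zero (Nat.sub_le K α) _ fun i hi _ =>
          sum_eq_zero fun s _ => by rw [hT α (i + s) (by omega), smul_zero]

end Vandermonde

theorem AddMonoidHom.iterate_map_sum {M ι : Type*} [AddCommMonoid M] (f : M →+ M) (n : ℕ)
    (s : Finset ι) (g : ι → M) : f^[n] (∑ i ∈ s, g i) = ∑ i ∈ s, f^[n] (g i) := by
  induction n with
  | zero => rfl
  | succ n ih => simp only [Function.iterate_succ_apply', ih, map_sum]

theorem AddMonoidHom.iterate_map_rat_smul {M : Type*} [AddCommGroup M] [Module ℚ M]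
    (f : M →+ M) (n : ℕ) (q : ℚ) (x : M) : f^[n] (q • x) = q • f^[n] x := by
  induction n with
  | zero => rfl
  | succ n ih => rw [Function.iterate_succ_apply', ih, map_rat_smul, Function.iterate_succ_apply']

theorem AddMonoidHom.iterate_apply_eq_zero {M : Type*} [AddMonoid M] {f : M →+ M} {x : M}
    (hx : f x = 0) {l : ℕ} (hl : l ≠ 0) : f^[l] x = 0 := by
  obtain ⟨j, rfl⟩ := Nat.exists_eq_succ_of_ne_zero hl
  rw [Function.iterate_succ_apply, hx, iterate_map_zero]

namespace Leibniz

variable {R : Type} [CommRing R] [Algebra ℚ R] {d : R →+ R}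

theorem map_one (hd : Leibniz d) : d 1 = 0 := by
  simpa using hd 1 1

theorem iterate_map_mul (hd : Leibniz d) (n : ℕ) (x y : R) :
    d^[n] (x * y) = ∑ i ∈ range (n + 1), n.choose i • (d^[i] x * d^[n - i] y) := by
  rw [← Nat.sum_antidiagonal_eq_sum_range_succ (fun i j => n.choose i • (d^[i] x * d^[j] y))]
  have hd' (a b : R) : d (a * b) = d a * b + a * d b := by rw [hd, add_comm, mul_comm b]
  induction n with
  | zero => simp
  | succ n ih =>
    rw [sum_antidiagonal_choose_succ_nsmul (fun i j => d^[i] x * d^[j] y) n]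
    simp only [Function.iterate_succ_apply', ih, map_sum, map_nsmul, hd', smul_add,
      sum_add_distrib]
    rw [add_comm]
    congr 1
    refine sum_congr rfl fun ij hij => ?_
    rw [n.choose_symm_of_eq_add (HasAntidiagonal.mem_antidiagonal.1 hij).symm]

end Leibniz

namespace PDO

variable {R : Type} [CommRing R] [Algebra ℚ R] {d : R →+ R}

@[simp] theorem add_coeff (A B : PDO R d) (n : ℤ) : (A + B).coeff n = A.coeff n + B.coeff n := rfl
@[simp] theorem neg_coeff (A : PDO R d) (n : ℤ) : (-A).coeff n = -A.coeff n := rfl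
@[simp] theorem smul_coeff (q : ℚ) (A : PDO R d) (n : ℤ) : (q • A).coeff n = q • A.coeff n := rfl
@[simp] theorem zero_coeff (n : ℤ) : (0 : PDO R d).coeff n = 0 := rfl
theorem const_coeff (r : R) (n : ℤ) : (const r : PDO R d).coeff n = if n = 0 then r else 0 := rfl

theorem one_eq_const : (1 : PDO R d) = const 1 := rfl

theorem const_add (x y : R) : (const x + const y : PDO R d) = const (x + y) :=
  ext' <| funext fun n => by by_cases hn : n = 0 <;> simp [const_coeff, hn]

theorem le_of_coeff_ne_zero {A : PDO R d} {a k : ℤ} (ha : ∀ k, a < k → A.coeff k = 0)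
    (hk : A.coeff k ≠ 0) : k ≤ a :=
  not_lt.1 (mt (ha k) hk)

instance : Module ℚ (PDO R d) where
  smul := (· • ·)
  one_smul A := ext' <| funext fun n => one_smul ℚ (A.coeff n)
  mul_smul p q A := ext' <| funext fun n => mul_smul p q (A.coeff n)
  smul_zero q := ext' <| funext fun _ => smul_zero q
  smul_add q A B := ext' <| funext fun n => smul_add q (A.coeff n) (B.coeff n)
  add_smul p q A := ext' <| funext fun n => add_smul p q (A.coeff n)
  zero_smul A := ext' <| funext fun n => zero_smul ℚ (A.coeff n)

/-- The summand of `(A * B).coeff n` in which `A` contributes its coefficient of order `k` and `l`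
derivatives fall on `B`: the product's index `m` (the order of `B`) is `n - k + l`. -/
def mulTerm (A B : PDO R d) (n k : ℤ) (l : ℕ) : R :=
  A.coeff k * (gbinom k l • d^[l] (B.coeff (n - k + l)))

theorem mulTerm_eq_zero {A B : PDO R d} {n k : ℤ} {l : ℕ}
    (h : A.coeff k = 0 ∨ B.coeff (n - k + l) = 0) : mulTerm A B n k l = 0 := by
  rcases h with h | h <;> simp [mulTerm, h]

theorem coeff_mul (A B : PDO R d) {a b n : ℤ} {s : Finset ℤ} {N : ℕ}
    (ha : ∀ k, a < k → A.coeff k = 0) (hb : ∀ m, b < m → B.coeff m = 0)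
    (hs : Icc (n - b) a ⊆ s) (hN : a + b < n + N) :
    (A * B).coeff n = ∑ k ∈ s, ∑ l ∈ range N, mulTerm A B n k l := by
  have hrow (k : ℤ) : (∑ᶠ m : ℤ, if _ : 0 ≤ k + m - n then
        A.coeff k * (gbinom k (k + m - n).toNat • d^[(k + m - n).toNat] (B.coeff m)) else 0) =
      ∑ l ∈ range N, mulTerm A B n k l := by
    let e : ℕ ↪ ℤ := Nat.castEmbedding.trans (addLeftEmbedding (n - k))
    rw [finsum_eq_sum_of_support_subset (s := (range N).map e), sum_map]
    · refine sum_congr rfl fun l _ => ?_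
      simp only [e, Function.Embedding.trans_apply, Nat.castEmbedding_apply,
        addLeftEmbedding_apply]
      rw [show k + (n - k + l) - n = (l : ℤ) by ring, dif_pos (Int.natCast_nonneg l),
        Int.toNat_natCast]
      rfl
    · intro m hm
      rw [Function.mem_support] at hm
      split_ifs at hm with hkm
      · have hA := le_of_coeff_ne_zero ha (left_ne_zero_of_mul hm)
        have hB := le_of_coeff_ne_zero hb fun h0 =>
          right_ne_zero_of_smul (right_ne_zero_of_mul hm) (by rw [h0, iterD_zero])
        simp only [coe_map, Set.mem_image, mem_coe, mem_range]
        exact ⟨(k + m - n).toNat, by omega, by simp [e]; omega⟩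
      · exact absurd rfl hm
  show (∑ᶠ (k : ℤ) (m : ℤ), _) = _
  simp only [hrow]
  refine finsum_eq_sum_of_support_subset _ fun k hk => hs ?_
  obtain ⟨l, -, hl⟩ := exists_ne_zero_of_sum_ne_zero hk
  obtain ⟨hA, hB⟩ := not_or.1 (mt mulTerm_eq_zero hl)
  have := le_of_coeff_ne_zero ha hA
  have := le_of_coeff_ne_zero hb hB
  exact mem_Icc.2 ⟨by omega, by omega⟩

theorem coeff_mul_eq_sum (A B : PDO R d) {a b : ℤ} (n : ℤ)
    (ha : ∀ k, a < k → A.coeff k = 0) (hb : ∀ m, b < m → B.coeff m = 0) :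
    (A * B).coeff n =
      ∑ k ∈ Icc (n - b) a, ∑ l ∈ range (a + b - n + 1).toNat, mulTerm A B n k l :=
  coeff_mul A B ha hb subset_rfl (by omega)

theorem coeff_mul_eq_zero (A B : PDO R d) {a b n : ℤ}
    (ha : ∀ k, a < k → A.coeff k = 0) (hb : ∀ m, b < m → B.coeff m = 0) (hn : a + b < n) :
    (A * B).coeff n = 0 := by
  rw [coeff_mul A B ha hb subset_rfl (N := 0) (by omega)]
  simp

theorem coeff_mul_add (A B : PDO R d) {a b : ℤ}
    (ha : ∀ k, a < k → A.coeff k = 0) (hb : ∀ m, b < m → B.coeff m = 0) :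
    (A * B).coeff (a + b) = A.coeff a * B.coeff b := by
  rw [coeff_mul A B ha hb (s := {a}) (N := 1) (by simp) (by omega)]
  simp [mulTerm, gbinom_zero_right]

theorem coeff_const_mul (r : R) (B : PDO R d) (n : ℤ) :
    (const r * B).coeff n = r * B.coeff n := by
  obtain ⟨b, hb⟩ := B.bdd
  have hb' : ∀ m, max b n < m → B.coeff m = 0 := fun m hm => hb m (by omega)
  have hr : ∀ k, 0 < k → (const r : PDO R d).coeff k = 0 := fun k hk => if_neg (by omega)
  rw [coeff_mul_eq_sum (const r) B n hr hb', sum_eq_single_of_mem 0 (by simp),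
    sum_eq_single_of_mem 0 (by simp)]
  · simp [mulTerm, const_coeff, gbinom_zero_right]
  · intro l _ hl
    simp [mulTerm, gbinom_zero_left hl]
  · intro k _ hk
    exact sum_eq_zero fun l _ => mulTerm_eq_zero (.inl (if_neg hk))

theorem coeff_mul_const (A : PDO R d) {c : R} (hc : d c = 0) (n : ℤ) :
    (A * const c).coeff n = A.coeff n * c := by
  obtain ⟨a, ha⟩ := A.bdd
  have ha' : ∀ k, max a n < k → A.coeff k = 0 := fun k hk => ha k (by omega)
  have hc' : ∀ k, 0 < k → (const c : PDO R d).coeff k = 0 := fun k hk => if_neg (by omega)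
  rw [coeff_mul_eq_sum A (const c) n ha' hc', sum_eq_single_of_mem n (by simp),
    sum_eq_single_of_mem 0 (by simp)]
  · simp [mulTerm, const_coeff, gbinom_zero_right]
  · intro l _ hl
    exact mulTerm_eq_zero (.inr (if_neg (by omega)))
  · intro k _ hk
    refine sum_eq_zero fun l _ => ?_
    by_cases hl : n - k + l = 0
    · simp [mulTerm, const_coeff, hl,
        AddMonoidHom.iterate_apply_eq_zero hc (show l ≠ 0 by omega)]
    · exact mulTerm_eq_zero (.inr (if_neg hl))

theorem mul_const_comm (A : PDO R d) {c : R} (hc : d c = 0) : A * const c = const c * A :=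
  ext' <| funext fun n => by rw [coeff_mul_const A hc, coeff_const_mul, mul_comm]

protected theorem zero_mul (B : PDO R d) : 0 * B = 0 := by
  obtain ⟨b, hb⟩ := B.bdd
  refine ext' <| funext fun n => ?_
  rw [coeff_mul_eq_sum 0 B n (a := 0) (fun _ _ => rfl) hb]
  exact sum_eq_zero fun k _ => sum_eq_zero fun l _ => mulTerm_eq_zero (.inl rfl)

protected theorem mul_zero (A : PDO R d) : A * 0 = 0 := by
  obtain ⟨a, ha⟩ := A.bdd
  refine ext' <| funext fun n => ?_
  rw [coeff_mul_eq_sum A 0 n (b := 0) ha fun _ _ => rfl]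
  exact sum_eq_zero fun k _ => sum_eq_zero fun l _ => mulTerm_eq_zero (.inr rfl)

protected theorem one_mul (A : PDO R d) : 1 * A = A :=
  ext' <| funext fun n => by rw [one_eq_const, coeff_const_mul, one_mul]

protected theorem mul_one (hd : Leibniz d) (A : PDO R d) : A * 1 = A :=
  ext' <| funext fun n => by rw [one_eq_const, coeff_mul_const A hd.map_one, mul_one]

protected theorem mul_add (A B C : PDO R d) : A * (B + C) = A * B + A * C := by
  obtain ⟨a, ha⟩ := A.bdd
  obtain ⟨b, hb⟩ := B.bdd
  obtain ⟨c, hc⟩ := C.bdd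
  have hb' : ∀ m, max b c < m → B.coeff m = 0 := fun m hm => hb m (by omega)
  have hc' : ∀ m, max b c < m → C.coeff m = 0 := fun m hm => hc m (by omega)
  have hbc : ∀ m, max b c < m → (B + C).coeff m = 0 := fun m hm => by
    simp [hb' m hm, hc' m hm]
  refine ext' <| funext fun n => ?_
  simp only [add_coeff, coeff_mul_eq_sum _ _ n ha hbc, coeff_mul_eq_sum _ _ n ha hb',
    coeff_mul_eq_sum _ _ n ha hc', ← sum_add_distrib, mulTerm, iterate_map_add, smul_add,
    mul_add]

protected theorem add_mul (A B C : PDO R d) : (A + B) * C = A * C + B * C := by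
  obtain ⟨a, ha⟩ := A.bdd
  obtain ⟨b, hb⟩ := B.bdd
  obtain ⟨c, hc⟩ := C.bdd
  have ha' : ∀ k, max a b < k → A.coeff k = 0 := fun k hk => ha k (by omega)
  have hb' : ∀ k, max a b < k → B.coeff k = 0 := fun k hk => hb k (by omega)
  have hab : ∀ k, max a b < k → (A + B).coeff k = 0 := fun k hk => by
    simp [ha' k hk, hb' k hk]
  refine ext' <| funext fun n => ?_
  simp only [add_coeff, coeff_mul_eq_sum _ _ n hab hc, coeff_mul_eq_sum _ _ n ha' hc,
    coeff_mul_eq_sum _ _ n hb' hc, ← sum_add_distrib, mulTerm, add_mul]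

/-- The summand of `(A * B * C).coeff n` in which `A`, `B`, `C` contribute their coefficients
of orders `k`, `m` and `n - k - m + α + β`, differentiated `0`, `α` and `β` times. -/
def tripleTerm (A B C : PDO R d) (n k m : ℤ) (α β : ℕ) : R :=
  A.coeff k * (d^[α] (B.coeff m) * d^[β] (C.coeff (n - k - m + α + β)))

theorem tripleTerm_eq_zero {A B C : PDO R d} {n k m : ℤ} {α β : ℕ}
    (h : B.coeff m = 0 ∨ C.coeff (n - k - m + α + β) = 0) : tripleTerm A B C n k m α β = 0 := by
  rcases h with h | h <;> simp [tripleTerm, h]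

/-- The change of variables `q = k + m - α` from the order `q` of `A * B` to the order `m`
of `B`. -/
theorem sum_Icc_tripleTerm_eq (A B C : PDO R d) {a b c n k : ℤ}
    (hb : ∀ m, b < m → B.coeff m = 0) (hc : ∀ p, c < p → C.coeff p = 0) (hk : k ≤ a)
    (α K : ℕ) :
    ∑ q ∈ Icc (n - c) (a + b), ∑ β ∈ range K,
        (gbinom k α * gbinom q β) • tripleTerm A B C n k (q - k + α) α β =
      ∑ m ∈ Icc (n - a - c) b, ∑ β ∈ range K,
        (gbinom k α * gbinom (k + m - α) β) • tripleTerm A B C n k m α β := by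
  have hsupp {m q : ℤ} (hq : ∑ β ∈ range K,
      (gbinom k α * gbinom q β) • tripleTerm A B C n k m α β ≠ 0) :
      m ≤ b ∧ n - k - m + α ≤ c := by
    obtain ⟨β, -, hβ⟩ := exists_ne_zero_of_sum_ne_zero hq
    obtain ⟨hB, hC⟩ := not_or.1 (mt tripleTerm_eq_zero (right_ne_zero_of_smul hβ))
    exact ⟨le_of_coeff_ne_zero hb hB, by have := le_of_coeff_ne_zero hc hC; omega⟩
  refine (sum_eq_sum_comp_add (k - α) (fun q hq => ?_) (fun m hm => ?_)).trans
    (sum_congr rfl fun m _ => ?_)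
  · have := hsupp hq
    exact mem_Icc.2 ⟨by omega, by omega⟩
  · have := hsupp hm
    exact mem_Icc.2 ⟨by omega, by omega⟩
  · rw [show m + (k - α) - k + α = m by ring, show m + (k - α) = k + m - α by ring]

theorem coeff_mul_mul_eq_sum (A B C : PDO R d) {a b c : ℤ} (n : ℤ)
    (ha : ∀ k, a < k → A.coeff k = 0) (hb : ∀ m, b < m → B.coeff m = 0)
    (hc : ∀ p, c < p → C.coeff p = 0) :
    (A * B * C).coeff n = ∑ k ∈ Icc (n - b - c) a, ∑ m ∈ Icc (n - a - c) b,
      ∑ α ∈ range (a + b + c - n + 1).toNat, ∑ β ∈ range (a + b + c - n + 1).toNat,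
        (gbinom k α * gbinom (k + m - α) β) • tripleTerm A B C n k m α β := by
  set K := (a + b + c - n + 1).toNat
  set G : ℤ → ℕ → ℤ → ℕ → R := fun k α q β =>
    (gbinom k α * gbinom q β) • tripleTerm A B C n k (q - k + α) α β
  have hab : ∀ q, a + b < q → (A * B).coeff q = 0 := fun q hq => coeff_mul_eq_zero A B ha hb hq
  calc (A * B * C).coeff n
      = ∑ q ∈ Icc (n - c) (a + b), ∑ β ∈ range K, ∑ k ∈ Icc (n - b - c) a, ∑ α ∈ range K,
          G k α q β := by
        rw [coeff_mul (A * B) C hab hc subset_rfl (N := K) (by omega)]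
        refine sum_congr rfl fun q hq => sum_congr rfl fun β _ => ?_
        rw [mem_Icc] at hq
        rw [mulTerm, coeff_mul A B ha hb (s := Icc (n - b - c) a) (N := K)
          (Icc_subset_Icc (by omega) le_rfl) (by omega), sum_mul]
        refine sum_congr rfl fun k _ => ?_
        rw [sum_mul]
        refine sum_congr rfl fun α _ => ?_
        simp only [G]
        rw [tripleTerm, show n - k - (q - k + α) + α + β = n - q + β by ring, mulTerm]
        simp only [smul_mul_assoc, mul_smul_comm, smul_smul, mul_assoc, mul_comm (gbinom q β)]
    _ = ∑ q ∈ Icc (n - c) (a + b), ∑ k ∈ Icc (n - b - c) a, ∑ α ∈ range K, ∑ β ∈ range K,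
          G k α q β := sum_congr rfl fun q _ => by
        rw [sum_comm]
        exact sum_congr rfl fun k _ => sum_comm
    _ = ∑ k ∈ Icc (n - b - c) a, ∑ α ∈ range K, ∑ q ∈ Icc (n - c) (a + b), ∑ β ∈ range K,
          G k α q β := by
        rw [sum_comm]
        exact sum_congr rfl fun k _ => sum_comm
    _ = _ := sum_congr rfl fun k hk =>
        (sum_congr rfl fun α _ => sum_Icc_tripleTerm_eq A B C hb hc (mem_Icc.1 hk).2 α K).trans
          sum_comm

theorem coeff_mul_mul_eq_sum_of_leibniz (hd : Leibniz d) (A B C : PDO R d) {a b c : ℤ} (n : ℤ)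
    (ha : ∀ k, a < k → A.coeff k = 0) (hb : ∀ m, b < m → B.coeff m = 0)
    (hc : ∀ p, c < p → C.coeff p = 0) :
    (A * (B * C)).coeff n = ∑ k ∈ Icc (n - b - c) a, ∑ m ∈ Icc (n - a - c) b,
      ∑ t ∈ range (a + b + c - n + 1).toNat, ∑ s ∈ range (a + b + c - n + 1).toNat,
        ∑ i ∈ range (t + 1),
          (gbinom k t * gbinom m s * (t.choose i : ℚ)) • tripleTerm A B C n k m i (t - i + s) := by
  set K := (a + b + c - n + 1).toNat
  have hbc : ∀ r, b + c < r → (B * C).coeff r = 0 := fun r hr => coeff_mul_eq_zero B C hb hc hr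
  rw [coeff_mul A (B * C) ha hbc (s := Icc (n - b - c) a) (N := K) (by rw [sub_sub])
    (by omega)]
  refine sum_congr rfl fun k hk => ?_
  rw [mem_Icc] at hk
  rw [sum_comm]
  refine sum_congr rfl fun t _ => ?_
  rw [mulTerm, coeff_mul B C hb hc (s := Icc (n - a - c) b) (N := K)
    (Icc_subset_Icc (by omega) le_rfl) (by omega)]
  simp only [AddMonoidHom.iterate_map_sum, smul_sum, mul_sum]
  refine sum_congr rfl fun m _ => sum_congr rfl fun s _ => ?_
  rw [mulTerm, mul_smul_comm (gbinom m s), AddMonoidHom.iterate_map_rat_smul,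
    hd.iterate_map_mul]
  simp only [smul_sum, mul_sum]
  refine sum_congr rfl fun i hi => ?_
  have hit : i ≤ t := Nat.lt_succ_iff.1 (mem_range.1 hi)
  have hC : n - k + t - m + s = n - k - m + i + ((t - i + s : ℕ) : ℤ) := by
    push_cast [hit]
    ring
  rw [tripleTerm, ← Function.iterate_add_apply, hC, ← Nat.cast_smul_eq_nsmul ℚ]
  simp only [mul_smul_comm, smul_smul, mul_assoc]

protected theorem mul_assoc (hd : Leibniz d) (A B C : PDO R d) : A * B * C = A * (B * C) := by
  obtain ⟨a, ha⟩ := A.bdd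
  obtain ⟨b, hb⟩ := B.bdd
  obtain ⟨c, hc⟩ := C.bdd
  refine ext' <| funext fun n => ?_
  rw [coeff_mul_mul_eq_sum A B C n ha hb hc, coeff_mul_mul_eq_sum_of_leibniz hd A B C n ha hb hc]
  refine sum_congr rfl fun k hk => sum_congr rfl fun m hm => ?_
  rw [mem_Icc] at hk hm
  have hT : ∀ α β : ℕ, (a + b + c - n + 1).toNat ≤ α + β → tripleTerm A B C n k m α β = 0 :=
    fun α β h => tripleTerm_eq_zero (.inr (hc _ (by omega)))
  rw [sum_gbinom_mul_gbinom_smul k m _ _ hT, sum_gbinom_mul_gbinom_mul_choose_smul k m _ _ hT]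

noncomputable abbrev ring (hd : Leibniz d) : Ring (PDO R d) where
  __ := (inferInstance : AddCommGroup (PDO R d))
  mul_assoc := PDO.mul_assoc hd
  one_mul := PDO.one_mul
  mul_one := PDO.mul_one hd
  left_distrib := PDO.mul_add
  right_distrib := PDO.add_mul
  zero_mul := PDO.zero_mul
  mul_zero := PDO.mul_zero
  npow n A := A ^ n
  npow_zero _ := rfl
  npow_succ _ _ := rfl

theorem exists_top_coeff {D : PDO R d} (hD : D ≠ 0) :
    ∃ n, D.coeff n ≠ 0 ∧ ∀ k, n < k → D.coeff k = 0 := by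
  have hne : ∃ k, D.coeff k ≠ 0 := by
    by_contra! h
    exact hD (ext' (funext h))
  obtain ⟨N, hN⟩ := D.bdd
  obtain ⟨n, hn, hmax⟩ := Int.exists_greatest_of_bdd
    ⟨N, fun k hk => le_of_coeff_ne_zero hN hk⟩ hne
  exact ⟨n, hn, fun k hk => by_contra fun h => (hmax k h).not_gt hk⟩

theorem eq_zero_of_mul_add_mul_eq_zero (h : Rˣ) {X Y D : PDO R d}
    (hX1 : X.coeff 1 = h) (hX2 : ∀ k, 1 < k → X.coeff k = 0)
    (hY1 : Y.coeff 1 = h) (hY2 : ∀ k, 1 < k → Y.coeff k = 0)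
    (hXDY : X * D + D * Y = 0) : D = 0 := by
  by_contra hD
  obtain ⟨n, hn, hgt⟩ := exists_top_coeff hD
  have htop : (X * D + D * Y).coeff (1 + n) = (2 : ℚ) • ((h : R) * D.coeff n) := by
    rw [add_coeff, coeff_mul_add X D hX2 hgt, add_comm 1 n, coeff_mul_add D Y hgt hY2, hX1, hY1,
      mul_comm (D.coeff n), two_smul]
  rw [hXDY, zero_coeff, eq_comm, smul_eq_zero, Units.mul_right_eq_zero] at htop
  exact hn (htop.resolve_left two_ne_zero)

end PDO

attribute [ext] EPDO

namespace EPDO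

variable {R : Type} [CommRing R] [Algebra ℚ R] {d : R →+ R}

theorem mk_mul_mk (A B C D : PDO R d) :
    (⟨A, B⟩ * ⟨C, D⟩ : EPDO R d) = ⟨A * C, A * D + B * C⟩ :=
  rfl

protected theorem pow_succ (S : EPDO R d) (n : ℕ) : S ^ (n + 1) = S ^ n * S := rfl

protected theorem pow_zero (S : EPDO R d) : S ^ 0 = ⟨1, 0⟩ := rfl

theorem lift_sub_eps_mul_lift (A B : PDO R d) : lift A - eps * lift B = ⟨A, -B⟩ := by
  ext1
  · exact sub_eq_self.2 (PDO.zero_mul B)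
  · show 0 - (0 * 0 + 1 * B) = -B
    rw [PDO.zero_mul, PDO.one_mul, zero_add, zero_sub]

theorem smul_lift (q : ℚ) (A : PDO R d) : q • lift A = lift (q • A) :=
  EPDO.ext rfl (smul_zero q)

theorem mk_pow_succ (hd : Leibniz d) {M X : PDO R d} (hMX : M * X = X * M) (n : ℕ) :
    (⟨M, X⟩ : EPDO R d) ^ (n + 1) = ⟨M ^ (n + 1), (n + 1) • (X * M ^ n)⟩ := by
  let _ := PDO.ring hd
  induction n with
  | zero => rw [EPDO.pow_succ, EPDO.pow_zero, mk_mul_mk]; simp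
  | succ n ih =>
    rw [EPDO.pow_succ, ih, mk_mul_mk, (Commute.pow_left hMX (n + 1)).eq, smul_mul_assoc,
      mul_assoc, ← pow_succ, ← pow_succ, succ_nsmul' _ (n + 1)]

theorem eq_of_mul_self_eq (hd : Leibniz d) (h : Rˣ) {S T : EPDO R d}
    (hS1 : S.re.coeff 1 = h) (hS2 : ∀ k, 1 < k → S.re.coeff k = 0)
    (hT1 : T.re.coeff 1 = h) (hT2 : ∀ k, 1 < k → T.re.coeff k = 0)
    (hST : S * S = T * T) : S = T := by
  let _ := PDO.ring hd
  have hre : S.re = T.re := by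
    refine sub_eq_zero.1 (PDO.eq_zero_of_mul_add_mul_eq_zero h hS1 hS2 hT1 hT2 ?_)
    calc S.re * (S.re - T.re) + (S.re - T.re) * T.re = S.re * S.re - T.re * T.re := by
          noncomm_ring
      _ = 0 := sub_eq_zero.2 (congrArg EPDO.re hST)
  have him : S.im = T.im := by
    refine sub_eq_zero.1 (PDO.eq_zero_of_mul_add_mul_eq_zero h hT1 hT2 hT1 hT2 ?_)
    calc T.re * (S.im - T.im) + (S.im - T.im) * T.re
        = (S.re * S.im + S.im * S.re) - (T.re * T.im + T.im * T.re) := by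
          rw [hre]; noncomm_ring
      _ = 0 := sub_eq_zero.2 (congrArg EPDO.im hST)
  exact EPDO.ext hre him

end EPDO

theorem deformation_by_central_constant_general
    (R : Type) [CommRing R] [Algebra ℚ R] (d : R →+ R)
    (hd : Leibniz d) (h : Rˣ)
    (u c : R) (hc : d c = 0)
    (M Minv : PDO R d)
    (hM1 : M.coeff 1 = (h : R)) (hM2 : ∀ k : ℤ, 1 < k → M.coeff k = 0)
    (hM3 : M * M = PDO.Lop h u)
    (hMinv : M * Minv = 1 ∧ Minv * M = 1)
    (Lt Msq : EPDO R d)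
    (hLt : Lt = EPDO.lift (PDO.Lop h u) - EPDO.eps * EPDO.lift (PDO.const (2 * c)))
    (hMsq : Msq = EPDO.lift M - EPDO.eps * EPDO.lift (PDO.const c * Minv)) :
    (Msq * Msq = Lt ∧
      ∀ S : EPDO R d, S.re.coeff 1 = (h : R) → (∀ k : ℤ, 1 < k → S.re.coeff k = 0) →
        (∀ k : ℤ, 0 < k → S.im.coeff k = 0) → S * S = Lt → S = Msq) ∧
    (∀ p : ℕ, Msq ^ (2 * p + 1)
        = EPDO.lift (M ^ (2 * p + 1))
          - EPDO.eps * (((2 * p + 1 : ℕ) : ℚ)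
              • EPDO.lift (PDO.const c * (Minv * M ^ (2 * p))))) ∧
    (∀ p : ℕ, EPDO.eres (Msq ^ (2 * p + 1))
        = (PDO.res (M ^ (2 * p + 1)),
           -(((2 * p + 1 : ℕ) : ℚ) • (c * PDO.res (Minv * M ^ (2 * p)))))) := by
  let _ := PDO.ring hd
  set X := PDO.const c * Minv
  have hMX : M * X = PDO.const c := by
    rw [← mul_assoc, PDO.mul_const_comm M hc, mul_assoc, hMinv.1, mul_one]
  have hXM : X * M = PDO.const c := by rw [mul_assoc, hMinv.2, mul_one]
  have hMsq' : Msq = ⟨M, -X⟩ := by rw [hMsq, EPDO.lift_sub_eps_mul_lift]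
  have hsq : Msq * Msq = Lt := by
    rw [hMsq', hLt, EPDO.lift_sub_eps_mul_lift, EPDO.mk_mul_mk, mul_neg, neg_mul, hMX, hXM,
      ← neg_add, PDO.const_add, two_mul, hM3]
  have hpow (p : ℕ) : Msq ^ (2 * p + 1) =
      ⟨M ^ (2 * p + 1), -(((2 * p + 1 : ℕ) : ℚ) • (PDO.const c * (Minv * M ^ (2 * p))))⟩ := by
    rw [hMsq', EPDO.mk_pow_succ hd (by rw [mul_neg, neg_mul, hMX, hXM]), Nat.cast_smul_eq_nsmul,
      neg_mul, smul_neg, mul_assoc]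
  refine ⟨⟨hsq, fun S hS1 hS2 _ hS => ?_⟩, fun p => ?_, fun p => ?_⟩
  · exact EPDO.eq_of_mul_self_eq hd h hS1 hS2 (hMsq' ▸ hM1) (hMsq' ▸ hM2) (hS.trans hsq.symm)
  · rw [hpow, EPDO.smul_lift, EPDO.lift_sub_eps_mul_lift]
  · rw [hpow]
    simp [EPDO.eres, PDO.res, PDO.coeff_const_mul]

/-- For `L̃ := L − 2εc` (with `∂c = 0`) the unique square root of the form `h∂ + (order ≤ 0)`
is `L^(1/2) − εcL^(−1/2)`; its odd powers are `L^(p+1/2) − ε(2p+1)cL^(p−1/2)`, and the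
corresponding residue formula holds. -/
theorem deformation_by_central_constant
    (R : Type) [CommRing R] [Algebra ℚ R] (d : R →+ R)
    (hd : Leibniz d) (h : Rˣ) (hdh : d (h : R) = 0)
    (u c : R) (hc : d c = 0)
    (M Minv : PDO R d)
    (hM1 : M.coeff 1 = (h : R)) (hM2 : ∀ k : ℤ, 1 < k → M.coeff k = 0)
    (hM3 : M * M = PDO.Lop h u)
    (hMinv : M * Minv = 1 ∧ Minv * M = 1)
    (Lt Msq : EPDO R d)
    (hLt : Lt = EPDO.lift (PDO.Lop h u) - EPDO.eps * EPDO.lift (PDO.const (2 * c)))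
    (hMsq : Msq = EPDO.lift M - EPDO.eps * EPDO.lift (PDO.const c * Minv)) :
    (Msq * Msq = Lt ∧
      ∀ S : EPDO R d, S.re.coeff 1 = (h : R) → (∀ k : ℤ, 1 < k → S.re.coeff k = 0) →
        (∀ k : ℤ, 0 < k → S.im.coeff k = 0) → S * S = Lt → S = Msq) ∧
    (∀ p : ℕ, Msq ^ (2 * p + 1)
        = EPDO.lift (M ^ (2 * p + 1))
          - EPDO.eps * (((2 * p + 1 : ℕ) : ℚ)
              • EPDO.lift (PDO.const c * (Minv * M ^ (2 * p))))) ∧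
    (∀ p : ℕ, EPDO.eres (Msq ^ (2 * p + 1))
        = (PDO.res (M ^ (2 * p + 1)),
           -(((2 * p + 1 : ℕ) : ℚ) • (c * PDO.res (Minv * M ^ (2 * p)))))) :=
  deformation_by_central_constant_general R d hd h u c hc M Minv hM1 hM2 hM3 hMinv Lt Msq hLt hMsq
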